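/- Let t ∈ [0,1] and let (θ_k), (α_k), (γ_k) be arbitrary real sequences. Then there exists a diagonal unitary operator V on ℓ²(ℤ), of the form Vφ_k = e^{iζ_k}φ_k for a real sequence (ζ_k)_{k∈ℤ}, such that V⁻¹ M((θ_k),(α_k),(γ_k)) V = M((θ_k),(α_k),(0)). In particular M((θ_k),(α_k),(γ_k)) is unitarily equivalent to M((θ_k),(α_k),(0)), i.e. to the same operator with all phases γ_k replaced by 0. -/

import Mathlib

open Complex

noncomputable section

/-- The Hilbert space `ℓ²(ℤ)`. -/
abbrev H : Type := lp (fun _ : ℤ => ℂ) 2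

/-- The canonical orthonormal basis vector `φ_k` of `ℓ²(ℤ)`. -/
def phi (k : ℤ) : H := lp.single 2 k 1

/-- `IsM t r θ α γ U` expresses that the bounded operator `U` on `ℓ²(ℤ)` acts on the
canonical basis as the monodromy operator `M((θ_k), (α_k), (γ_k))` with transition
coefficient `t` and reflection coefficient `r`. -/
def IsM (t r : ℝ) (θ α γ : ℤ → ℝ) (U : H →L[ℂ] H) : Prop :=
  ∀ k : ℤ,
    U (phi (2 * k)) =
      (Complex.I * r * t * Complex.exp (-Complex.I * ((θ (2 * k) + θ (2 * k - 1) : ℝ) : ℂ))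
        * Complex.exp (-Complex.I * ((α (2 * k) - γ (2 * k - 1) : ℝ) : ℂ))) • phi (2 * k - 1)
      + ((r : ℂ) ^ 2 * Complex.exp (-Complex.I * ((θ (2 * k) + θ (2 * k - 1) : ℝ) : ℂ))
        * Complex.exp (-Complex.I * ((α (2 * k) - α (2 * k - 1) : ℝ) : ℂ))) • phi (2 * k)
      + (Complex.I * r * t * Complex.exp (-Complex.I * ((θ (2 * k) + θ (2 * k + 1) : ℝ) : ℂ))
        * Complex.exp (-Complex.I * ((γ (2 * k) + α (2 * k + 1) : ℝ) : ℂ))) • phi (2 * k + 1)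
      - ((t : ℂ) ^ 2 * Complex.exp (-Complex.I * ((θ (2 * k) + θ (2 * k + 1) : ℝ) : ℂ))
        * Complex.exp (-Complex.I * ((γ (2 * k) + γ (2 * k + 1) : ℝ) : ℂ))) • phi (2 * k + 2)
    ∧
    U (phi (2 * k + 1)) =
      (-((t : ℂ) ^ 2) * Complex.exp (-Complex.I * ((θ (2 * k) + θ (2 * k - 1) : ℝ) : ℂ))
        * Complex.exp (Complex.I * ((γ (2 * k) + γ (2 * k - 1) : ℝ) : ℂ))) • phi (2 * k - 1)
      + (Complex.I * t * r * Complex.exp (-Complex.I * ((θ (2 * k) + θ (2 * k - 1) : ℝ) : ℂ))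
        * Complex.exp (Complex.I * ((γ (2 * k) + α (2 * k - 1) : ℝ) : ℂ))) • phi (2 * k)
      + ((r : ℂ) ^ 2 * Complex.exp (-Complex.I * ((θ (2 * k) + θ (2 * k + 1) : ℝ) : ℂ))
        * Complex.exp (Complex.I * ((α (2 * k) - α (2 * k + 1) : ℝ) : ℂ))) • phi (2 * k + 1)
      + (Complex.I * r * t * Complex.exp (-Complex.I * ((θ (2 * k) + θ (2 * k + 1) : ℝ) : ℂ))
        * Complex.exp (Complex.I * ((α (2 * k) - γ (2 * k + 1) : ℝ) : ℂ))) • phi (2 * k + 2)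

end

/-! With `ζ` a discrete primitive of `-γ` (`ζ (n + 1) - ζ n = -γ n`), the `γ`-dependence of each
matrix entry `⟪φ_j, U φ_k⟫` is exactly the phase `e^{i(ζ_j - ζ_k)}`, so the diagonal unitary
`V φ_k = e^{iζ_k} φ_k` removes it: `U V = V U₀` holds on every `φ_k`, hence everywhere by continuity. -/

section GaugePhase

variable {G : Type*} [AddCommGroup G]

noncomputable def gaugePhase (γ : ℤ → G) (n : ℤ) : G :=
  ∑ k ∈ Finset.Ico n 0, γ k - ∑ k ∈ Finset.Ico 0 n, γ k

theorem gaugePhase_add_one (γ : ℤ → G) (n : ℤ) :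
    gaugePhase γ (n + 1) = gaugePhase γ n - γ n := by
  rcases le_or_gt 0 n with hn | hn
  · simp [gaugePhase, Finset.Ico_eq_empty_of_le, hn, (by omega : (0 : ℤ) ≤ n + 1),
      ← Finset.sum_Ico_add_eq_sum_Ico_add_one hn]
    abel
  · rw [gaugePhase, gaugePhase, ← Finset.insert_Ico_add_one_left_eq_Ico hn,
      Finset.sum_insert (by simp)]
    simp [Finset.Ico_eq_empty_of_le, hn.le, (by omega : n + 1 ≤ 0)]

end GaugePhase

section HilbertBasis

variable {ι 𝕜 E : Type*} [RCLike 𝕜] [NormedAddCommGroup E] [InnerProductSpace 𝕜 E]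

theorem Orthonormal.smul_of_norm_eq_one {v : ι → E} (hv : Orthonormal 𝕜 v) {u : ι → 𝕜}
    (hu : ∀ i, ‖u i‖ = 1) : Orthonormal 𝕜 fun i => u i • v i := by
  classical
  rw [orthonormal_iff_ite] at hv ⊢
  intro i j
  rw [inner_smul_left, inner_smul_right, hv]
  split_ifs with h
  · subst h
    rw [mul_one, RCLike.conj_mul, hu, RCLike.ofReal_one, one_pow]
  · simp

theorem HilbertBasis.ext {F : Type*} [TopologicalSpace F] [AddCommMonoid F] [Module 𝕜 F]
    [T2Space F] (b : HilbertBasis ι 𝕜 E) {f g : E →L[𝕜] F} (h : ∀ i, f (b i) = g (b i)) :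
    f = g :=
  ContinuousLinearMap.ext_on (Submodule.dense_iff_topologicalClosure_eq_top.mpr b.dense_span)
    (by rintro _ ⟨i, rfl⟩; exact h i)

variable [CompleteSpace E]

theorem HilbertBasis.exists_unitary_apply_eq_smul (b : HilbertBasis ι 𝕜 E) {u : ι → 𝕜}
    (hu : ∀ i, ‖u i‖ = 1) : ∃ V ∈ unitary (E →L[𝕜] E), ∀ i, V (b i) = u i • b i := by
  have hspan : Submodule.span 𝕜 (Set.range b) ≤
      Submodule.span 𝕜 (Set.range fun i => u i • b i) := by
    rw [Submodule.span_le]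
    rintro _ ⟨i, rfl⟩
    have hui : u i ≠ 0 := norm_ne_zero_iff.mp (by rw [hu]; exact one_ne_zero)
    rw [← inv_smul_smul₀ hui (b i)]
    exact Submodule.smul_mem _ _ (Submodule.subset_span ⟨i, rfl⟩)
  let b' := HilbertBasis.mk (b.orthonormal.smul_of_norm_eq_one hu)
    (b.dense_span.ge.trans (Submodule.topologicalClosure_mono hspan))
  refine ⟨Unitary.linearIsometryEquiv.symm (b.repr.trans b'.repr.symm),
    (Unitary.linearIsometryEquiv.symm _).2, fun i => ?_⟩
  classical
  simp [b.repr_self, b'.repr_symm_single, b', HilbertBasis.coe_mk]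

end HilbertBasis

noncomputable def phiBasis : HilbertBasis ℤ ℂ H := .ofRepr (LinearIsometryEquiv.refl ℂ H)

theorem coe_phiBasis : ⇑phiBasis = phi := funext fun k => (phiBasis.repr_symm_single k).symm

theorem IsM.comp_diagonal_apply_phi {t r : ℝ} {θ α γ : ℤ → ℝ} {U U₀ : H →L[ℂ] H}
    (hU : IsM t r θ α γ U) (hU₀ : IsM t r θ α (fun _ => 0) U₀) {ζ : ℤ → ℝ}
    (hζ : ∀ n, ζ (n + 1) = ζ n - γ n) {V : H →L[ℂ] H}
    (hV : ∀ k, V (phi k) = exp (I * ζ k) • phi k) (k : ℤ) :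
    U (V (phi k)) = V (U₀ (phi k)) := by
  obtain ⟨m, rfl | rfl⟩ := Int.even_or_odd' k
  on_goal 1 => rw [hV, map_smul, (hU m).1, (hU₀ m).1]
  on_goal 2 => rw [hV, map_smul, (hU m).2, (hU₀ m).2]
  all_goals
    have h₁ := hζ (2 * m - 1)
    have h₂ := hζ (2 * m)
    have h₃ := hζ (2 * m + 1)
    rw [sub_add_cancel] at h₁
    rw [add_assoc, one_add_one_eq_two] at h₃
    simp only [map_add, map_sub, map_smul, hV, smul_smul, h₁, h₂, h₃]
    match_scalars <;>
      simp only [mul_sub, mul_add, neg_mul, exp_sub, exp_add, exp_neg, mul_zero, exp_zero] <;>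
      field_simp

theorem M_gauge_equivalence_general (t : ℝ)
    (θ α γ : ℤ → ℝ) (U U₀ : H →L[ℂ] H)
    (hU : IsM t (Real.sqrt (1 - t ^ 2)) θ α γ U)
    (hU₀ : IsM t (Real.sqrt (1 - t ^ 2)) θ α (fun _ => 0) U₀) :
    ∃ (ζ : ℤ → ℝ) (V : H →L[ℂ] H),
      V ∈ unitary (H →L[ℂ] H) ∧
      (∀ k : ℤ, V (phi k) = Complex.exp (Complex.I * (ζ k : ℂ)) • phi k) ∧
      U ∘L V = V ∘L U₀ := by
  obtain ⟨V, hV_unitary, hV⟩ := phiBasis.exists_unitary_apply_eq_smul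
    (u := fun k => exp (I * gaugePhase γ k)) fun k => norm_exp_I_mul_ofReal _
  rw [coe_phiBasis] at hV
  refine ⟨gaugePhase γ, V, hV_unitary, hV, phiBasis.ext fun k => ?_⟩
  rw [coe_phiBasis]
  exact hU.comp_diagonal_apply_phi hU₀ (gaugePhase_add_one γ) hV k

/-- The phases `γ_k` can be gauged away: `M((θ_k),(α_k),(γ_k))` is conjugate, via a
diagonal unitary `V φ_k = e^{iζ_k} φ_k`, to `M((θ_k),(α_k),(0))`. -/
theorem M_gauge_equivalence (t : ℝ) (ht0 : 0 ≤ t) (ht1 : t ≤ 1)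
    (θ α γ : ℤ → ℝ) (U U₀ : H →L[ℂ] H)
    (hU : IsM t (Real.sqrt (1 - t ^ 2)) θ α γ U)
    (hU₀ : IsM t (Real.sqrt (1 - t ^ 2)) θ α (fun _ => 0) U₀) :
    ∃ (ζ : ℤ → ℝ) (V : H →L[ℂ] H),
      V ∈ unitary (H →L[ℂ] H) ∧
      (∀ k : ℤ, V (phi k) = Complex.exp (Complex.I * (ζ k : ℂ)) • phi k) ∧
      U ∘L V = V ∘L U₀ :=
  M_gauge_equivalence_general t θ α γ U U₀ hU hU₀
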